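/- The map B induces a homeomorphism φ : S³/Q₈ → SO₃(ℝ)/T(ℝ) between the coset spaces (each equipped with the quotient topology), satisfying φ(qQ₈) = B(q)T(ℝ) for every unit quaternion q. -/

import Mathlib

open Quaternion Metric

noncomputable section

/-- The real quaternions. -/
abbrev H := Quaternion ℝ

/-- The group `S³` of unit quaternions. -/
abbrev S3 := Metric.sphere (0 : H) 1

lemma mem_S3 (a : H) (h : Quaternion.normSq a = 1) : a ∈ Metric.sphere (0 : H) 1 := by
  rw [mem_sphere_zero_iff_norm]
  have h2 : ‖a‖ * ‖a‖ = 1 := by rw [← Quaternion.normSq_eq_norm_mul_self, h]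
  nlinarith [norm_nonneg a]

/-- `i` as a unit quaternion. -/
def qi : S3 := ⟨⟨0,1,0,0⟩, mem_S3 _ (by refine (Quaternion.normSq_def' _).trans ?_; simp)⟩
/-- `j` as a unit quaternion. -/
def qj : S3 := ⟨⟨0,0,1,0⟩, mem_S3 _ (by refine (Quaternion.normSq_def' _).trans ?_; simp)⟩
/-- `k` as a unit quaternion. -/
def qk : S3 := ⟨⟨0,0,0,1⟩, mem_S3 _ (by refine (Quaternion.normSq_def' _).trans ?_; simp)⟩

lemma sq2 : (Real.sqrt 2)⁻¹ ^ 2 = 1/2 := by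
  rw [inv_pow, Real.sq_sqrt (by norm_num : (2:ℝ) ≥ 0)]
  norm_num

/-- `τᵢ = (1+i)/√2` as a unit quaternion. -/
def τi : S3 := ⟨⟨(Real.sqrt 2)⁻¹, (Real.sqrt 2)⁻¹, 0, 0⟩,
  mem_S3 _ (by refine (Quaternion.normSq_def' _).trans ?_; simp [sq2]; norm_num)⟩
/-- `τⱼ = (1+j)/√2` as a unit quaternion. -/
def τj : S3 := ⟨⟨(Real.sqrt 2)⁻¹, 0, (Real.sqrt 2)⁻¹, 0⟩,
  mem_S3 _ (by refine (Quaternion.normSq_def' _).trans ?_; simp [sq2]; norm_num)⟩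
/-- `τₖ = (1+k)/√2` as a unit quaternion. -/
def τk : S3 := ⟨⟨(Real.sqrt 2)⁻¹, 0, 0, (Real.sqrt 2)⁻¹⟩,
  mem_S3 _ (by refine (Quaternion.normSq_def' _).trans ?_; simp [sq2]; norm_num)⟩

/-- `ω₀ = (1+i+j+k)/2` as a unit quaternion. -/
def ω0 : S3 := ⟨⟨1/2, 1/2, 1/2, 1/2⟩, mem_S3 _ (by refine (Quaternion.normSq_def' _).trans ?_; norm_num)⟩
/-- `ωᵢ = (1−i+j+k)/2` as a unit quaternion. -/
def ωi : S3 := ⟨⟨1/2, -(1/2), 1/2, 1/2⟩, mem_S3 _ (by refine (Quaternion.normSq_def' _).trans ?_; norm_num)⟩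
/-- `ωⱼ = (1+i−j+k)/2` as a unit quaternion. -/
def ωj : S3 := ⟨⟨1/2, 1/2, -(1/2), 1/2⟩, mem_S3 _ (by refine (Quaternion.normSq_def' _).trans ?_; norm_num)⟩
/-- `ωₖ = (1+i+j−k)/2` as a unit quaternion. -/
def ωk : S3 := ⟨⟨1/2, 1/2, 1/2, -(1/2)⟩, mem_S3 _ (by refine (Quaternion.normSq_def' _).trans ?_; norm_num)⟩

/-- The quaternion group `Q₈`, the subgroup of `S³` generated by `i` and `j`. -/
def Q8 : Subgroup S3 := Subgroup.closure {qi, qj}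
/-- The binary octahedral group `O`, the subgroup of `S³` generated by `(1+i)/√2` and `(1+j)/√2`. -/
def Oct : Subgroup S3 := Subgroup.closure {τi, τj}

/-- The standard covering map `B` from (unit) quaternions to rotation matrices:
`q = a+bi+cj+dk` is sent to the matrix of the rotation `v ↦ q v q̄` of the space of pure
quaternions in the basis `(i,j,k)`. -/
def Bmat (q : H) : Matrix (Fin 3) (Fin 3) ℝ :=
  !![q.re^2 + q.imI^2 - q.imJ^2 - q.imK^2, 2*(q.imI*q.imJ - q.re*q.imK),
       2*(q.imI*q.imK + q.re*q.imJ);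
     2*(q.imI*q.imJ + q.re*q.imK), q.re^2 - q.imI^2 + q.imJ^2 - q.imK^2,
       2*(q.imJ*q.imK - q.re*q.imI);
     2*(q.imI*q.imK - q.re*q.imJ), 2*(q.imJ*q.imK + q.re*q.imI),
       q.re^2 - q.imI^2 - q.imJ^2 + q.imK^2]

/-- `SO₃(ℝ)` as a subgroup of the orthogonal group: the kernel of the determinant. -/
def SO3 : Subgroup ↥(Matrix.orthogonalGroup (Fin 3) ℝ) :=
  MonoidHom.ker (Matrix.detMonoidHom.comp (Matrix.orthogonalGroup (Fin 3) ℝ).subtype)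

/-- The subgroup `T(ℝ)` of diagonal matrices in `SO₃(ℝ)`. -/
def Tdiag : Subgroup ↥SO3 where
  carrier := {A | (((A : ↥(Matrix.orthogonalGroup (Fin 3) ℝ)) :
    Matrix (Fin 3) (Fin 3) ℝ)).IsDiag}
  one_mem' := Matrix.isDiag_one
  mul_mem' := by
    intro a b ha hb i j hij
    rw [Subgroup.coe_mul, Submonoid.coe_mul, Matrix.mul_apply]
    refine Finset.sum_eq_zero fun k _ => ?_
    by_cases hk : i = k
    · subst hk; rw [hb hij, mul_zero]
    · rw [ha hk, zero_mul]
  inv_mem' := by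
    intro a ha
    have h1 : ((((a⁻¹ : ↥SO3) : ↥(Matrix.orthogonalGroup (Fin 3) ℝ))) :
        Matrix (Fin 3) (Fin 3) ℝ)
        = star (((a : ↥(Matrix.orthogonalGroup (Fin 3) ℝ)) : Matrix (Fin 3) (Fin 3) ℝ)) :=
      rfl
    show Matrix.IsDiag _
    rw [h1]
    exact ha.conjTranspose

/-! `B` is a continuous surjective homomorphism `S³ → SO₃(ℝ)`: a rotation `M` with
`1 + tr M > 0` is `B(q)` for Shepperd's quaternion `q`, and any rotation becomes such after
multiplication by one of the half-turns `B(i), B(j), B(k)`. The off-diagonal entries of `B(q)` are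
`2(bc ∓ ad), 2(bd ± ac), 2(cd ∓ ab)`, so `B(q)` is diagonal iff `q ∈ {±1, ±i, ±j, ±k} = Q₈`,
i.e. `Q₈ = B⁻¹(T)`. Hence `B` induces a continuous bijection `S³/Q₈ → SO₃(ℝ)/T(ℝ)`, a
homeomorphism because `S³/Q₈` is compact and `SO₃(ℝ)/T(ℝ)` is Hausdorff (`T` is closed). -/

open Matrix

theorem QuotientGroup.exists_homeomorph_of_comap_eq {G K : Type*} [Group G] [Group K]
    [TopologicalSpace G] [TopologicalSpace K] [CompactSpace G] {M : Subgroup K} [T2Space (K ⧸ M)]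
    {N : Subgroup G} (f : G →* K) (hf : Continuous f) (hsurj : Function.Surjective f)
    (hN : M.comap f = N) :
    ∃ φ : (G ⧸ N) ≃ₜ (K ⧸ M), ∀ g : G, φ g = f g := by
  subst hN
  let φ : G ⧸ M.comap f → K ⧸ M := Quotient.map' f fun a b hab => by
    rw [QuotientGroup.leftRel_apply] at hab ⊢
    simpa using hab
  have hφ : Function.Bijective φ := by
    constructor
    · rintro ⟨a⟩ ⟨b⟩ hab
      exact QuotientGroup.eq.mpr (by simpa using QuotientGroup.eq.mp hab)
    · rintro ⟨y⟩
      obtain ⟨a, rfl⟩ := hsurj y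
      exact ⟨a, rfl⟩
  have hcont : Continuous φ :=
    (QuotientGroup.isQuotientMap_mk _).continuous_iff.mpr (QuotientGroup.continuous_mk.comp hf)
  exact ⟨hcont.homeoOfEquivCompactToT2 (f := Equiv.ofBijective φ hφ), fun _ => rfl⟩

theorem Matrix.isClosed_setOf_isDiag {n α : Type*} [TopologicalSpace α] [Zero α] [T1Space α] :
    IsClosed {M : Matrix n n α | M.IsDiag} := by
  have : {M : Matrix n n α | M.IsDiag} =
      ⋂ (i) (j) (_ : i ≠ j), (fun M => M i j) ⁻¹' {0} := by
    ext
    simp [IsDiag, Pairwise]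
  rw [this]
  exact isClosed_iInter fun i => isClosed_iInter fun j => isClosed_iInter fun _ =>
    isClosed_singleton.preimage (continuous_apply_apply i j)

theorem Matrix.adjugate_eq_transpose_of_mem_specialOrthogonalGroup {n R : Type*} [Fintype n]
    [DecidableEq n] [CommRing R] {M : Matrix n n R} (hM : M ∈ specialOrthogonalGroup n R) :
    M.adjugate = Mᵀ := by
  obtain ⟨horth, hdet⟩ := mem_specialOrthogonalGroup_iff.mp hM
  rw [← inv_eq_left_inv ((mem_orthogonalGroup_iff' n R).mp horth), inv_def, hdet,
    Ring.inverse_one, one_smul]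

lemma normSq_coe_S3 (q : S3) : normSq (q : H) = 1 := by
  rw [normSq_eq_norm_mul_self, norm_eq_of_mem_sphere q, mul_one]

lemma Bmat_mul (p q : H) : Bmat (p * q) = Bmat p * Bmat q := by
  ext i j
  fin_cases i <;> fin_cases j <;> simp [Bmat, mul_apply, Fin.sum_univ_three] <;> ring

lemma Bmat_mem_specialOrthogonalGroup {q : H} (hq : normSq q = 1) :
    Bmat q ∈ specialOrthogonalGroup (Fin 3) ℝ := by
  rw [normSq_def'] at hq
  refine mem_specialOrthogonalGroup_iff.mpr ⟨(mem_orthogonalGroup_iff _ _).mpr ?_, ?_⟩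
  · ext i j
    fin_cases i <;> fin_cases j <;> simp [Bmat, mul_apply, Fin.sum_univ_three] <;> grind
  · simp only [Bmat, det_fin_three, Fin.isValue, of_apply, cons_val', cons_val_zero,
      cons_val_fin_one, cons_val_one, cons_val]
    grind

lemma continuous_Bmat : Continuous Bmat := by
  have := continuous_re
  have := continuous_imI
  have := continuous_imJ
  have := continuous_imK
  unfold Bmat
  fun_prop

/-- Shepperd's formula: `B(q)` has trace `4a² - 1` and antisymmetric part `4a (b, c, d)`,
where `q = a + bi + cj + dk`, which dictates the witness. -/
lemma exists_Bmat_eq_of_trace_pos {M : Matrix (Fin 3) (Fin 3) ℝ}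
    (hM : M ∈ specialOrthogonalGroup (Fin 3) ℝ) (htr : 0 < 1 + M.trace) :
    ∃ q : H, normSq q = 1 ∧ Bmat q = M := by
  obtain ⟨horth, -⟩ := mem_specialOrthogonalGroup_iff.mp hM
  have hadj := adjugate_eq_transpose_of_mem_specialOrthogonalGroup hM
  rw [adjugate_fin_three] at hadj
  have hrow := fun i j => congrFun₂ ((mem_orthogonalGroup_iff _ _).mp horth) i j
  have hcol := fun i j => congrFun₂ ((mem_orthogonalGroup_iff' _ _).mp horth) i j
  have hcof := fun i j => congrFun₂ hadj i j
  simp only [mul_apply, transpose_apply, Fin.sum_univ_three, Fin.isValue, one_apply,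
    Fin.forall_fin_succ, Fin.succ_zero_eq_one, Fin.succ_one_eq_two, IsEmpty.forall_iff, and_true,
    ↓reduceIte, zero_ne_one, Fin.reduceEq, Fin.succ_ne_zero, of_apply, cons_val',
    cons_val_fin_one, cons_val_zero, cons_val_succ] at hrow hcol hcof
  obtain ⟨a, ha, ha2⟩ : ∃ a : ℝ, 0 < a ∧ 4 * a ^ 2 = 1 + M.trace :=
    ⟨√(1 + M.trace) / 2, by positivity, by rw [div_pow, Real.sq_sqrt htr.le]; ring⟩
  rw [trace_fin_three] at ha2
  refine ⟨⟨a, (M 2 1 - M 1 2) / (4 * a), (M 0 2 - M 2 0) / (4 * a),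
    (M 1 0 - M 0 1) / (4 * a)⟩, (normSq_def' _).trans ?_, ?_⟩
  · field_simp
    grind
  · ext i j
    fin_cases i <;> fin_cases j <;> simp [Bmat] <;> field_simp <;> grind

lemma exists_Bmat_eq {M : Matrix (Fin 3) (Fin 3) ℝ}
    (hM : M ∈ specialOrthogonalGroup (Fin 3) ℝ) :
    ∃ q : H, normSq q = 1 ∧ Bmat q = M := by
  have hlift : ∀ e : S3, Bmat e * Bmat e = 1 → 0 < 1 + (Bmat e * M).trace →
      ∃ q : H, normSq q = 1 ∧ Bmat q = M := by
    intro e hee htr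
    obtain ⟨p, hp, hBp⟩ := exists_Bmat_eq_of_trace_pos
      (mul_mem (Bmat_mem_specialOrthogonalGroup (normSq_coe_S3 e)) hM) htr
    refine ⟨e * p, by rw [map_mul, normSq_coe_S3, hp, one_mul], ?_⟩
    rw [Bmat_mul, hBp, ← Matrix.mul_assoc, hee, Matrix.one_mul]
  -- `B(1), B(i), B(j), B(k)` are the diagonal sign matrices: they are involutions and sum to `0`,
  -- so `1 + tr (B(e) M)` is positive for one of them, and `B(e) M` lifts.
  have hinv : ∀ e ∈ ({1, qi, qj, qk} : Set S3), Bmat e * Bmat e = 1 := by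
    rintro e (rfl | rfl | rfl | rfl) <;> ext i j <;> fin_cases i <;> fin_cases j <;>
      simp [Bmat, qi, qj, qk, mul_apply, Fin.sum_univ_three]
  have hB : Bmat (1 : S3) + Bmat qi + Bmat qj + Bmat qk = 0 := by
    ext i j
    fin_cases i <;> fin_cases j <;> simp [Bmat, qi, qj, qk]
  have hsum : (Bmat (1 : S3) * M).trace + (Bmat qi * M).trace + (Bmat qj * M).trace +
      (Bmat qk * M).trace = 0 := by
    rw [← trace_add, ← trace_add, ← trace_add, ← add_mul, ← add_mul, ← add_mul, hB,
      zero_mul, trace_zero]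
  by_cases h1 : 0 < 1 + (Bmat (1 : S3) * M).trace
  · exact hlift 1 (hinv 1 (by simp)) h1
  by_cases hi : 0 < 1 + (Bmat qi * M).trace
  · exact hlift qi (hinv qi (by simp)) hi
  by_cases hj : 0 < 1 + (Bmat qj * M).trace
  · exact hlift qj (hinv qj (by simp)) hj
  exact hlift qk (hinv qk (by simp)) (by linarith)

def Bhom : S3 →* SO3 where
  toFun q :=
    ⟨⟨Bmat q, (mem_specialOrthogonalGroup_iff.mp
      (Bmat_mem_specialOrthogonalGroup (normSq_coe_S3 q))).1⟩,
      (mem_specialOrthogonalGroup_iff.mp (Bmat_mem_specialOrthogonalGroup (normSq_coe_S3 q))).2⟩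
  map_one' := by
    ext i j
    fin_cases i <;> fin_cases j <;> simp [Bmat, one_apply]
  map_mul' p q := Subtype.ext (Subtype.ext (Bmat_mul p q))

lemma continuous_Bhom : Continuous Bhom :=
  ((continuous_Bmat.comp continuous_subtype_val).subtype_mk _).subtype_mk _

lemma coe_SO3_mem_specialOrthogonalGroup (R : SO3) :
    ((R : orthogonalGroup (Fin 3) ℝ) : Matrix (Fin 3) (Fin 3) ℝ) ∈
      specialOrthogonalGroup (Fin 3) ℝ :=
  mem_specialOrthogonalGroup_iff.mpr ⟨R.1.2, R.2⟩

lemma Bhom_surjective : Function.Surjective Bhom := by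
  intro R
  obtain ⟨q, hq, hBq⟩ := exists_Bmat_eq (coe_SO3_mem_specialOrthogonalGroup R)
  exact ⟨⟨q, mem_S3 q hq⟩, Subtype.ext (Subtype.ext hBq)⟩

instance isClosed_Tdiag : IsClosed (Tdiag : Set SO3) :=
  isClosed_setOf_isDiag.preimage (continuous_subtype_val.comp continuous_subtype_val)

lemma qk_eq_qi_mul_qj : qk = qi * qj := by
  apply Subtype.ext
  show (⟨0, 0, 0, 1⟩ : H) = ⟨0, 1, 0, 0⟩ * ⟨0, 0, 1, 0⟩
  rw [QuaternionAlgebra.mk_mul_mk]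
  norm_num

lemma coe_qi_mul_qi : (qi : H) * qi = -1 := by
  show (⟨0, 1, 0, 0⟩ : H) * (⟨0, 1, 0, 0⟩ : H) = -1
  rw [QuaternionAlgebra.mk_mul_mk]
  ext <;> norm_num

lemma qi_mem_Q8 : qi ∈ Q8 := Subgroup.subset_closure (by simp)

lemma qj_mem_Q8 : qj ∈ Q8 := Subgroup.subset_closure (by simp)

lemma qk_mem_Q8 : qk ∈ Q8 := qk_eq_qi_mul_qj ▸ mul_mem qi_mem_Q8 qj_mem_Q8

lemma neg_mem_Q8 {x : S3} (hx : x ∈ Q8) : -x ∈ Q8 := by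
  have : -x = qi * qi * x := Subtype.ext (show -(x : H) = qi * qi * x by
    rw [coe_qi_mul_qi, neg_one_mul])
  rw [this]
  exact mul_mem (mul_mem qi_mem_Q8 qi_mem_Q8) hx

lemma Q8_le_comap_Bhom : Q8 ≤ Tdiag.comap Bhom := by
  refine Subgroup.closure_le _ |>.mpr ?_
  rintro e (rfl | rfl) i j hij <;> fin_cases i <;> fin_cases j <;>
    simp_all [Bhom, Bmat, qi, qj]

lemma mem_Q8_of_coe_eq {x e : S3} (he : e ∈ Q8) (h : (x : H) = e ∨ -(x : H) = e) :
    x ∈ Q8 := by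
  rcases h with h | h
  · rwa [Subtype.ext h]
  · rw [show x = -e from Subtype.ext (neg_eq_iff_eq_neg.mp h)]
    exact neg_mem_Q8 he

lemma mem_Q8_of_isDiag_Bmat {x : S3} (h : (Bmat x).IsDiag) : x ∈ Q8 := by
  obtain ⟨q, hq⟩ := x
  have hcoord : ((q.re = 1 ∨ q.re = -1) ∧ q.imI = 0 ∧ q.imJ = 0 ∧ q.imK = 0) ∨
      ((q.imI = 1 ∨ q.imI = -1) ∧ q.re = 0 ∧ q.imJ = 0 ∧ q.imK = 0) ∨
      ((q.imJ = 1 ∨ q.imJ = -1) ∧ q.re = 0 ∧ q.imI = 0 ∧ q.imK = 0) ∨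
      ((q.imK = 1 ∨ q.imK = -1) ∧ q.re = 0 ∧ q.imI = 0 ∧ q.imJ = 0) := by
    have hn := normSq_coe_S3 ⟨q, hq⟩
    rw [normSq_def'] at hn
    have hoff : ∀ i j : Fin 3, i ≠ j → Bmat q i j = 0 := fun i j => @h i j
    simp only [ne_eq, Bmat, of_apply, cons_val', cons_val_fin_one, Fin.forall_fin_succ, Fin.isValue,
      cons_val_zero, cons_val_succ, Fin.succ_zero_eq_one, Fin.succ_one_eq_two, IsEmpty.forall_iff,
      and_true, not_true_eq_false, zero_ne_one, not_false_eq_true, mul_eq_zero,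
      OfNat.ofNat_ne_zero, false_or, forall_const, Fin.reduceEq, true_and, Fin.succ_ne_zero] at hoff
    grind
  rcases hcoord with ⟨h1 | h1, h2, h3, h4⟩ | ⟨h1 | h1, h2, h3, h4⟩ |
    ⟨h1 | h1, h2, h3, h4⟩ | ⟨h1 | h1, h2, h3, h4⟩
  · exact mem_Q8_of_coe_eq (one_mem Q8) (.inl (by ext <;> simp [*]))
  · exact mem_Q8_of_coe_eq (one_mem Q8) (.inr (by ext <;> simp [*]))
  · exact mem_Q8_of_coe_eq qi_mem_Q8 (.inl (by ext <;> simp [*, qi]))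
  · exact mem_Q8_of_coe_eq qi_mem_Q8 (.inr (by ext <;> simp [*, qi]))
  · exact mem_Q8_of_coe_eq qj_mem_Q8 (.inl (by ext <;> simp [*, qj]))
  · exact mem_Q8_of_coe_eq qj_mem_Q8 (.inr (by ext <;> simp [*, qj]))
  · exact mem_Q8_of_coe_eq qk_mem_Q8 (.inl (by ext <;> simp [*, qk]))
  · exact mem_Q8_of_coe_eq qk_mem_Q8 (.inr (by ext <;> simp [*, qk]))

lemma comap_Bhom_Tdiag : Tdiag.comap Bhom = Q8 :=
  le_antisymm (fun _ hx => mem_Q8_of_isDiag_Bmat hx) Q8_le_comap_Bhom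

/-- `B` induces a homeomorphism `φ : S³/Q₈ ≃ SO₃(ℝ)/T(ℝ)` of coset spaces
(with their quotient topologies) with `φ(qQ₈) = B(q)T(ℝ)` for every unit quaternion `q`. -/
theorem stmt6 :
    ∃ φ : (S3 ⧸ Q8) ≃ₜ (↥SO3 ⧸ Tdiag),
      ∀ (q : S3) (R : ↥SO3),
        (((R : ↥(Matrix.orthogonalGroup (Fin 3) ℝ)) : Matrix (Fin 3) (Fin 3) ℝ)
            = Bmat (q : H)) →
          φ (QuotientGroup.mk q) = QuotientGroup.mk R := by
  obtain ⟨φ, hφ⟩ := QuotientGroup.exists_homeomorph_of_comap_eq Bhom continuous_Bhom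
    Bhom_surjective comap_Bhom_Tdiag
  refine ⟨φ, fun q R hR => ?_⟩
  rw [hφ, show Bhom q = R from Subtype.ext (Subtype.ext hR.symm)]

end
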